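/- arXiv:1606.05053 — 3 statements merged into one kernel-verified Lean document; each statement's English description precedes it below -/
import Mathlib

section
/- The single-attribute perturbation mechanism of Algorithm 2 satisfies ε-local differential privacy: for any two inputs t, t' ∈ [-1,1]^d and any possible output t*, Pr[f(t) = t*] ≤ e^ε · Pr[f(t') = t*]. -/
open Real

lemma key (ε x y : ℝ) (hε : 0 < ε) (hx : x ∈ Set.Icc (-1:ℝ) 1) (hy : y ∈ Set.Icc (-1:ℝ) 1) :
    (x * (exp ε - 1) + exp ε + 1) / (2 * exp ε + 2) ≤
      exp ε * ((y * (exp ε - 1) + exp ε + 1) / (2 * exp ε + 2)) := by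
  have he : 1 ≤ exp ε := one_le_exp hε.le
  have hden : 0 < 2 * exp ε + 2 := by linarith
  rw [← mul_div_assoc, div_le_div_iff₀ hden hden]
  nlinarith [hx.1, hx.2, hy.1, hy.2, mul_le_mul_of_nonneg_left hy.1 (le_of_lt (by linarith : (0:ℝ) < exp ε)), sq_nonneg (exp ε - 1)]

/-- Algorithm 2 satisfies ε-local differential privacy: for any two input tuples
t, t' ∈ [-1,1]^d and any possible output (determined by the chosen coordinate `j` and
the sign `s` of the non-zero entry), the output probabilities differ by at most e^ε. -/
theorem stmt2 (ε : ℝ) (hε : 0 < ε) (d : ℕ) (hd : 1 ≤ d)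
    (t t' : Fin d → ℝ)
    (ht : ∀ j, t j ∈ Set.Icc (-1 : ℝ) 1) (ht' : ∀ j, t' j ∈ Set.Icc (-1 : ℝ) 1)
    (j : Fin d) (s : Bool) :
    (1 / d) * (if s then (t j * (exp ε - 1) + exp ε + 1) / (2 * exp ε + 2)
               else (-(t j) * (exp ε - 1) + exp ε + 1) / (2 * exp ε + 2)) ≤
      exp ε * ((1 / d) * (if s then (t' j * (exp ε - 1) + exp ε + 1) / (2 * exp ε + 2)
               else (-(t' j) * (exp ε - 1) + exp ε + 1) / (2 * exp ε + 2))) := by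
  have hdpos : (0:ℝ) ≤ 1 / d := by positivity
  have hneg : ∀ x : ℝ, x ∈ Set.Icc (-1:ℝ) 1 → -x ∈ Set.Icc (-1:ℝ) 1 := by
    intro x hx; exact ⟨by linarith [hx.2], by linarith [hx.1]⟩
  cases s <;> simp only [if_true, if_false, Bool.false_eq_true] <;>
    [ (have h := key ε _ _ hε (hneg _ (ht j)) (hneg _ (ht' j)));
      (have h := key ε _ _ hε (ht j) (ht' j)) ] <;>
  calc 1 / (d:ℝ) * _ ≤ 1 / (d:ℝ) * (exp ε * _) := by
        exact mul_le_mul_of_nonneg_left h hdpos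
    _ = exp ε * (1 / d * _) := by ring
end

section
/- Algorithm 2 is unbiased in every coordinate: if t* is the output of the mechanism on input t ∈ [-1,1]^d, then for every j ∈ {1,...,d}, E[t*[j]] = t[j]. -/
open Real

/-- Algorithm 2 is unbiased in every coordinate: E[t*[j]] = t[j].
The chosen coordinate equals j with probability 1/d, in which case the output at j is
±B·d with the stated probabilities; otherwise (probability (d-1)/d) the output at j is 0. -/
theorem stmt3 (ε : ℝ) (hε : 0 < ε) (d : ℕ) (hd : 1 ≤ d)
    (t : Fin d → ℝ) (ht : ∀ j, t j ∈ Set.Icc (-1 : ℝ) 1)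
    (B : ℝ) (hB : B = (exp ε + 1) / (exp ε - 1)) (j : Fin d) :
    (1 / d) * (((t j * (exp ε - 1) + exp ε + 1) / (2 * exp ε + 2)) * (B * d)
        + (1 - (t j * (exp ε - 1) + exp ε + 1) / (2 * exp ε + 2)) * (-(B * d)))
      + ((d - 1) / d) * 0 = t j := by
  have he : (1 : ℝ) < exp ε := by
    have := Real.add_one_lt_exp (ne_of_gt hε); linarith
  have h1 : exp ε - 1 ≠ 0 := by linarith
  have h2 : 2 * exp ε + 2 ≠ 0 := by linarith
  have hd0 : (d : ℝ) ≠ 0 := by positivity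
  subst hB
  field_simp
  ring
end

section
/- The per-coordinate variance of Algorithm 2's output is bounded: for any input t ∈ [-1,1]^d and any coordinate j, Var[t*[j]] = (1/d)·(B·d)^2 − t[j]^2 ≤ B^2 · d, where B = (e^ε+1)/(e^ε−1). -/
open Real

/-- The per-coordinate variance of Algorithm 2's output:
Var[t*[j]] = E[(t*[j])²] − (E[t*[j]])² = (1/d)·(B·d)² − t[j]² ≤ B²·d. -/
theorem stmt4 (ε : ℝ) (hε : 0 < ε) (d : ℕ) (hd : 1 ≤ d)
    (t : Fin d → ℝ) (ht : ∀ j, t j ∈ Set.Icc (-1 : ℝ) 1)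
    (B : ℝ) (hB : B = (exp ε + 1) / (exp ε - 1)) (j : Fin d)
    (p : ℝ) (hp : p = (t j * (exp ε - 1) + exp ε + 1) / (2 * exp ε + 2)) :
    (1 / d) * (p * (B * d) ^ 2 + (1 - p) * (-(B * d)) ^ 2) - (t j) ^ 2
        = (1 / d) * (B * d) ^ 2 - (t j) ^ 2 ∧
    (1 / d) * (B * d) ^ 2 - (t j) ^ 2 ≤ B ^ 2 * d := by
  have hd0 : (d : ℝ) ≠ 0 := by positivity
  constructor
  · ring_nf
  · have h1 : (1 / d) * (B * d) ^ 2 = B ^ 2 * d := by field_simp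
    rw [h1]
    nlinarith [sq_nonneg (t j)]
end
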